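/- (Gaussian kernel bound) Let x_1,…,x_N ∈ ℝⁿ be nonzero, r_x = min_t ‖x_t‖₂ > 0, y_t = x_tᵀθ° + v_t, ε ≥ 0, I_ε^0 = {t : |v_t| ≤ ε}, γ₂ > 0 and α ∈ (0,1]. Assume ρ_α(X)/(1 + e^{−γ₂ε²}) + e^{−γ₂ε²}·|I_ε^0|/N > 1. Then for any maximizer θ* over ℝⁿ of θ ↦ ∑_{k=1}^N exp(−γ₂(y_k − x_kᵀθ)²), it holds that ‖θ* − θ°‖₂ ≤ (1/(α·r_x))·√((2/γ₂)·ln(1/μ)), where μ = [(1+e^{−γ₂ε²})/(|I_ε^0|/N + ρ_α(X) − 1)]·[ρ_α(X)/(1+e^{−γ₂ε²}) + e^{−γ₂ε²}·|I_ε^0|/N − 1]. -/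

import Mathlib

open scoped BigOperators

noncomputable section

/-- Euclidean dot product on `ℝⁿ`. -/
def dotR {n : ℕ} (u v : Fin n → ℝ) : ℝ := ∑ i, u i * v i

/-- Euclidean 2-norm on `ℝⁿ`. -/
def nrm {n : ℕ} (v : Fin n → ℝ) : ℝ := Real.sqrt (∑ i, v i ^ 2)

/-- The index set `𝓘_α(X,η) = {t : |x_tᵀη| ≥ α‖x_t‖₂‖η‖₂}`. -/
def Iset {n N : ℕ} (x : Fin N → Fin n → ℝ) (a : ℝ) (η : Fin n → ℝ) : Finset (Fin N) :=
  Finset.univ.filter fun t => a * nrm (x t) * nrm η ≤ |dotR (x t) η|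

/-- The correlation measure `ρ_α(X) = (1/N)·inf_{η ≠ 0} |𝓘_α(X,η)|`. -/
def rhoX {n N : ℕ} (x : Fin N → Fin n → ℝ) (a : ℝ) : ℝ :=
  (1 / N) * sInf ((fun η : Fin n → ℝ => ((Iset x a η).card : ℝ)) '' {η | η ≠ 0})

/-- The constant `μ` as a function of `s = e^{-γ₂ε²}`, `q = |I_ε^0|/N` and `ρ = ρ_α(X)`. -/
def muVal (s q ρ : ℝ) : ℝ := (1 + s) / (q + ρ - 1) * (ρ / (1 + s) + s * q - 1)

end

/-!
Put `η = θ* - θ°`. For `t ∈ 𝓘_α(X,η) ∩ I_ε^0` the residual `y_t - x_tᵀθ* = v_t - x_tᵀη` has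
`|v_t| ≤ ε` and `|x_tᵀη| ≥ α r_x ‖η‖`, so `e^{-γ₂ε²}` times its Gaussian term is at most
`E = exp(-γ₂ (α r_x ‖η‖)² / 2)`; every other term is at most `1`. By the definition of `ρ_α(X)`
there are at least `N (|I_ε^0|/N + ρ_α(X) - 1)` such indices, while the objective at `θ°` is at
least `|I_ε^0| e^{-γ₂ε²}`. Comparing the objective at `θ°` and at its maximizer `θ*` forces
`μ ≤ E`, which is the bound on `‖η‖` after taking logarithms.
-/

open Finset Real

lemma nrm_nonneg {n : ℕ} (v : Fin n → ℝ) : 0 ≤ nrm v := sqrt_nonneg _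

lemma nrm_pos {n : ℕ} {v : Fin n → ℝ} (hv : v ≠ 0) : 0 < nrm v := by
  obtain ⟨i, hi⟩ := Function.ne_iff.mp hv
  exact sqrt_pos.2 <| sum_pos' (fun j _ => sq_nonneg (v j)) ⟨i, mem_univ i, sq_pos_of_ne_zero hi⟩

lemma dotR_sub_right {n : ℕ} (u v w : Fin n → ℝ) : dotR u (v - w) = dotR u v - dotR u w := by
  simp only [dotR, Pi.sub_apply, mul_sub, sum_sub_distrib]

lemma Iset_zero {n N : ℕ} (x : Fin N → Fin n → ℝ) (a : ℝ) : Iset x a 0 = univ := by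
  ext t
  simp [Iset, nrm, dotR]

lemma le_abs_dotR_of_mem_Iset {n N : ℕ} {x : Fin N → Fin n → ℝ} {a r : ℝ} {η : Fin n → ℝ}
    {t : Fin N} (ha : 0 ≤ a)
    (hr : r ≤ nrm (x t)) (ht : t ∈ Iset x a η) : a * r * nrm η ≤ |dotR (x t) η| := by
  refine le_trans ?_ (mem_filter.1 ht).2
  gcongr
  exact nrm_nonneg η

section Correlation

variable {n N : ℕ} (x : Fin N → Fin n → ℝ) (a : ℝ)

lemma bddBelow_card_Iset :
    BddBelow ((fun η : Fin n → ℝ => ((Iset x a η).card : ℝ)) '' {η | η ≠ 0}) :=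
  ⟨0, by rintro _ ⟨η, -, rfl⟩; positivity⟩

lemma rhoX_nonneg : 0 ≤ rhoX x a :=
  mul_nonneg (by positivity) (Real.sInf_nonneg <| by rintro _ ⟨η, -, rfl⟩; positivity)

lemma rhoX_le_one : rhoX x a ≤ 1 := by
  set S := (fun η : Fin n → ℝ => ((Iset x a η).card : ℝ)) '' {η | η ≠ 0}
  have hS : sInf S ≤ N := by
    rcases S.eq_empty_or_nonempty with hS | ⟨_, η, hη, rfl⟩
    · rw [hS, Real.sInf_empty]; positivity
    · refine (csInf_le (bddBelow_card_Iset x a) ⟨η, hη, rfl⟩).trans ?_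
      show ((Iset x a η).card : ℝ) ≤ N
      exact_mod_cast (card_le_univ (Iset x a η)).trans_eq (Fintype.card_fin N)
  calc rhoX x a ≤ 1 / N * N := by unfold rhoX; gcongr
    _ ≤ 1 := by rw [one_div]; exact inv_mul_le_one

lemma mul_rhoX_le_card_Iset (η : Fin n → ℝ) : (N : ℝ) * rhoX x a ≤ (Iset x a η).card := by
  rcases eq_or_ne η 0 with rfl | hη
  · rw [Iset_zero, card_univ, Fintype.card_fin]
    exact mul_le_of_le_one_right N.cast_nonneg (rhoX_le_one x a)
  rcases N.eq_zero_or_pos with rfl | hN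
  · simp
  rw [rhoX, ← mul_assoc, mul_one_div_cancel (by positivity), one_mul]
  exact csInf_le (bddBelow_card_Iset x a) ⟨η, hη, rfl⟩

lemma mul_rhoX_add_card_sub_le_card_inter (η : Fin n → ℝ) (I : Finset (Fin N)) :
    N * rhoX x a + I.card - N ≤ (Iset x a η ∩ I).card := by
  have hunion : ((Iset x a η ∪ I).card : ℝ) ≤ N := by
    exact_mod_cast (card_le_univ _).trans_eq (Fintype.card_fin N)
  rw [cast_card_inter]
  linarith [mul_rhoX_le_card_Iset x a η]

end Correlation

lemma exp_neg_mul_sq_mul_exp_neg_mul_sq_sub_le {γ ε v u D : ℝ} (hγ : 0 ≤ γ) (hv : |v| ≤ ε)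
    (hD : 0 ≤ D) (hDu : D ≤ |u|) :
    exp (-(γ * ε ^ 2)) * exp (-(γ * (v - u) ^ 2)) ≤ exp (-(γ * D ^ 2 / 2)) := by
  have hv2 : v ^ 2 ≤ ε ^ 2 := sq_le_sq' (abs_le.1 hv).1 (abs_le.1 hv).2
  have hDu2 : D ^ 2 ≤ u ^ 2 := by simpa only [sq_abs] using pow_le_pow_left₀ hD hDu 2
  -- `u² ≤ 2v² + 2(v - u)²`, with defect `(2v - u)²`
  have key : D ^ 2 / 2 ≤ ε ^ 2 + (v - u) ^ 2 := by nlinarith [sq_nonneg (2 * v - u)]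
  rw [← exp_add, exp_le_exp]
  nlinarith [mul_le_mul_of_nonneg_left key hγ]

lemma mul_sum_le_card_mul_add_card_compl_mul {ι : Type*} [Fintype ι] [DecidableEq ι]
    (T : Finset ι) {f : ι → ℝ} {s E : ℝ} (hs : 0 ≤ s) (hf : ∀ t, f t ≤ 1)
    (hT : ∀ t ∈ T, s * f t ≤ E) :
    s * ∑ t, f t ≤ T.card * E + (Fintype.card ι - T.card) * s := by
  have hin := sum_le_card_nsmul T _ E hT
  have hout := sum_le_card_nsmul Tᶜ (fun t => s * f t) s fun t _ => mul_le_of_le_one_right hs (hf t)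
  rw [card_compl, nsmul_eq_mul, Nat.cast_sub (card_le_univ T)] at hout
  rw [nsmul_eq_mul] at hin
  rw [← sum_add_sum_compl T, mul_add, mul_sum, mul_sum]
  linarith

noncomputable def correntropy {n N : ℕ} (γ : ℝ) (x : Fin N → Fin n → ℝ) (y : Fin N → ℝ)
    (θ : Fin n → ℝ) : ℝ :=
  ∑ k, exp (-(γ * (y k - dotR (x k) θ) ^ 2))

section Correntropy

variable {n N : ℕ} {γ : ℝ} {x : Fin N → Fin n → ℝ} {θo : Fin n → ℝ} {v y : Fin N → ℝ}

lemma card_mul_exp_le_correntropy (hy : ∀ t, y t = dotR (x t) θo + v t) (hγ : 0 ≤ γ) (ε : ℝ) :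
    ((univ.filter fun t => |v t| ≤ ε).card : ℝ) * exp (-(γ * ε ^ 2)) ≤ correntropy γ x y θo := by
  rw [← nsmul_eq_mul]
  calc _ ≤ ∑ t ∈ univ.filter (fun t => |v t| ≤ ε), exp (-(γ * (y t - dotR (x t) θo) ^ 2)) := by
        refine card_nsmul_le_sum _ _ _ fun t ht => ?_
        have hv := abs_le.1 (mem_filter.1 ht).2
        rw [hy t, add_sub_cancel_left, exp_le_exp, neg_le_neg_iff]
        exact mul_le_mul_of_nonneg_left (sq_le_sq' hv.1 hv.2) hγ
    _ ≤ correntropy γ x y θo :=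
        sum_le_sum_of_subset_of_nonneg (subset_univ _) fun _ _ _ => (exp_pos _).le

lemma exp_mul_correntropy_le (hy : ∀ t, y t = dotR (x t) θo + v t) (hγ : 0 ≤ γ) {a r ε : ℝ}
    (ha : 0 ≤ a) (hr : ∀ t, r ≤ nrm (x t)) (hr0 : 0 ≤ r) {θ : Fin n → ℝ} (T : Finset (Fin N))
    (hTI : T ⊆ Iset x a (θ - θo)) (hTv : ∀ t ∈ T, |v t| ≤ ε) :
    exp (-(γ * ε ^ 2)) * correntropy γ x y θ ≤
      T.card * exp (-(γ * (a * r * nrm (θ - θo)) ^ 2 / 2)) + (N - T.card) * exp (-(γ * ε ^ 2)) := by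
  have hD : 0 ≤ a * r * nrm (θ - θo) := by have := nrm_nonneg (θ - θo); positivity
  have hcard := mul_sum_le_card_mul_add_card_compl_mul T (exp_pos _).le
    (f := fun k => exp (-(γ * (y k - dotR (x k) θ) ^ 2)))
    (fun t => exp_le_one_iff.2 (neg_nonpos.2 (by positivity))) fun t ht => by
      have hres : y t - dotR (x t) θ = v t - dotR (x t) (θ - θo) := by
        rw [hy t, dotR_sub_right]; ring
      rw [hres]
      exact exp_neg_mul_sq_mul_exp_neg_mul_sq_sub_le hγ (hTv t ht) hD
        (le_abs_dotR_of_mem_Iset ha (hr t) (hTI ht))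
  simpa only [correntropy, Fintype.card_fin] using hcard

end Correntropy

lemma muVal_pos {s q ρ : ℝ} (hs : 0 ≤ s) (hd : 0 < q + ρ - 1) (h : 1 < ρ / (1 + s) + s * q) :
    0 < muVal s q ρ :=
  mul_pos (div_pos (by linarith) hd) (by linarith)

lemma muVal_le_of_mul_sq_le {N c s q ρ E : ℝ} (hN : 0 < N) (hs0 : 0 ≤ s) (hs1 : s ≤ 1) (hq : q ≤ 1)
    (hρ : ρ ≤ 1) (hd : 0 < q + ρ - 1) (hc : N * (q + ρ - 1) ≤ c)
    (hcount : N * q * s ^ 2 ≤ c * E + (N - c) * s) : muVal s q ρ ≤ E := by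
  have hμ : muVal s q ρ = (ρ + (1 + s) * (s * q - 1)) / (q + ρ - 1) := by
    rw [muVal, div_mul_eq_mul_div, mul_sub, mul_add, mul_div_cancel₀ _ (by linarith)]
    ring
  have hsq : s * q ≤ 1 := (mul_le_of_le_one_right hs0 hq).trans hs1
  have hρs := mul_nonneg (sub_nonneg.2 hs1) (sub_nonneg.2 hρ)
  rw [hμ, div_le_iff₀ hd]
  rcases le_or_gt s E with hsE | hEs
  · nlinarith [mul_nonneg hs0 (sub_nonneg.2 hsq), mul_le_mul_of_nonneg_right hsE hd.le]
  · have hdiv : N * (q * s ^ 2) ≤ N * (s - (q + ρ - 1) * (s - E)) := by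
      nlinarith [mul_le_mul_of_nonneg_right hc (sub_nonneg.2 hEs.le)]
    nlinarith [le_of_mul_le_mul_left hdiv hN]

lemma le_sqrt_two_div_mul_log_one_div {γ D μ : ℝ} (hγ : 0 < γ) (hμ : 0 < μ)
    (h : μ ≤ exp (-(γ * D ^ 2 / 2))) : D ≤ sqrt ((2 / γ) * log (1 / μ)) := by
  have hlog : γ * D ^ 2 / 2 ≤ log (1 / μ) := by
    rw [one_div, log_inv, le_neg, ← log_exp (-(γ * D ^ 2 / 2))]
    exact log_le_log hμ h
  refine le_sqrt_of_sq_le ?_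
  rw [div_mul_eq_mul_div, le_div_iff₀ hγ]
  linarith

lemma ciInf_nrm_pos {n N : ℕ} (hN : 0 < N) {x : Fin N → Fin n → ℝ} (hx : ∀ t, x t ≠ 0) :
    0 < ⨅ t, nrm (x t) := by
  have : Nonempty (Fin N) := ⟨⟨0, hN⟩⟩
  obtain ⟨t, ht⟩ := exists_eq_ciInf_of_finite (f := fun t => nrm (x t))
  exact ht ▸ nrm_pos (hx t)

theorem mce_gaussian_bound_general {n N : ℕ} (hN : 0 < N)
    (x : Fin N → Fin n → ℝ) (hx : ∀ t, x t ≠ 0)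
    (θo : Fin n → ℝ) (v y : Fin N → ℝ)
    (hy : ∀ t, y t = dotR (x t) θo + v t)
    (ε : ℝ)
    (γ₂ : ℝ) (hγ₂ : 0 < γ₂) (a : ℝ) (ha : 0 < a)
    (hstab : 1 <
      rhoX x a / (1 + Real.exp (-(γ₂ * ε ^ 2))) +
        Real.exp (-(γ₂ * ε ^ 2)) *
          (((Finset.univ.filter fun t => |v t| ≤ ε).card : ℝ) / N))
    (θs : Fin n → ℝ)
    (hmax : ∀ θ : Fin n → ℝ,
      ∑ k, Real.exp (-(γ₂ * (y k - dotR (x k) θ) ^ 2)) ≤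
        ∑ k, Real.exp (-(γ₂ * (y k - dotR (x k) θs) ^ 2))) :
    nrm (θs - θo) ≤
      (1 / (a * (⨅ t, nrm (x t)))) *
        Real.sqrt ((2 / γ₂) *
          Real.log (1 /
            muVal (Real.exp (-(γ₂ * ε ^ 2)))
              (((Finset.univ.filter fun t => |v t| ≤ ε).card : ℝ) / N)
              (rhoX x a))) := by
  set s := exp (-(γ₂ * ε ^ 2))
  set I₀ := univ.filter fun t => |v t| ≤ ε
  set q : ℝ := I₀.card / N
  set ρ := rhoX x a
  set r := ⨅ t, nrm (x t)
  set T := Iset x a (θs - θo) ∩ I₀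
  have hN' : (0 : ℝ) < N := Nat.cast_pos.2 hN
  have hNq : N * q = I₀.card := mul_div_cancel₀ _ hN'.ne'
  have hr : 0 < r := ciInf_nrm_pos hN hx
  have hs0 : 0 < s := exp_pos _
  have hs1 : s ≤ 1 := exp_le_one_iff.2 (neg_nonpos.2 (by positivity))
  have hq1 : q ≤ 1 :=
    div_le_one_of_le₀ (by exact_mod_cast (card_le_univ I₀).trans_eq (Fintype.card_fin N)) hN'.le
  have hd : 0 < q + ρ - 1 := by
    have := div_le_self (rhoX_nonneg x a) (by linarith : 1 ≤ 1 + s)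
    nlinarith [mul_le_of_le_one_left (by positivity : 0 ≤ q) hs1]
  have hT : N * (q + ρ - 1) ≤ T.card := by
    linarith [mul_rhoX_add_card_sub_le_card_inter x a (θs - θo) I₀]
  have hcount : N * q * s ^ 2 ≤
      T.card * exp (-(γ₂ * (a * r * nrm (θs - θo)) ^ 2 / 2)) + (N - T.card) * s :=
    calc N * q * s ^ 2 = s * (I₀.card * s) := by rw [hNq]; ring
      _ ≤ s * correntropy γ₂ x y θs :=
        mul_le_mul_of_nonneg_left ((card_mul_exp_le_correntropy hy hγ₂.le ε).trans (hmax θo)) hs0.le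
      _ ≤ _ := exp_mul_correntropy_le hy hγ₂.le ha.le (ciInf_le (Finite.bddBelow_range _)) hr.le
        T inter_subset_left fun t ht => (mem_filter.1 (mem_inter.1 ht).2).2
  have hD := le_sqrt_two_div_mul_log_one_div hγ₂ (muVal_pos hs0.le hd hstab)
    (muVal_le_of_mul_sq_le hN' hs0.le hs1 hq1 (rhoX_le_one x a) hd hT hcount)
  rw [one_div_mul_eq_div, le_div_iff₀ (by positivity)]
  linarith

/-- the error bound for the Gaussian-kernel maximum correntropy
estimator (`ℓ(a) = a²`). -/
theorem mce_gaussian_bound {n N : ℕ} (hN : 0 < N)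
    (x : Fin N → Fin n → ℝ) (hx : ∀ t, x t ≠ 0)
    (θo : Fin n → ℝ) (v y : Fin N → ℝ)
    (hy : ∀ t, y t = dotR (x t) θo + v t)
    (ε : ℝ) (hε : 0 ≤ ε)
    (γ₂ : ℝ) (hγ₂ : 0 < γ₂) (a : ℝ) (ha : 0 < a) (ha1 : a ≤ 1)
    (hstab : 1 <
      rhoX x a / (1 + Real.exp (-(γ₂ * ε ^ 2))) +
        Real.exp (-(γ₂ * ε ^ 2)) *
          (((Finset.univ.filter fun t => |v t| ≤ ε).card : ℝ) / N))
    (θs : Fin n → ℝ)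
    (hmax : ∀ θ : Fin n → ℝ,
      ∑ k, Real.exp (-(γ₂ * (y k - dotR (x k) θ) ^ 2)) ≤
        ∑ k, Real.exp (-(γ₂ * (y k - dotR (x k) θs) ^ 2))) :
    nrm (θs - θo) ≤
      (1 / (a * (⨅ t, nrm (x t)))) *
        Real.sqrt ((2 / γ₂) *
          Real.log (1 /
            muVal (Real.exp (-(γ₂ * ε ^ 2)))
              (((Finset.univ.filter fun t => |v t| ≤ ε).card : ℝ) / N)
              (rhoX x a))) :=
  mce_gaussian_bound_general hN x hx θo v y hy ε γ₂ hγ₂ a ha hstab θs hmax
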